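/- arXiv:0804.4014 — 5 statements merged into one kernel-verified Lean document; each statement's English description precedes it below -/
import Mathlib

section
/- Let b₁,...,bₙ ∈ ℝ^m be an LLL-reduced basis of the lattice L, let 1 ≤ k ≤ n, and let d₁,...,d_k be arbitrary linearly independent vectors in L. Then ‖b₁‖ ≤ 2^{(n−k)/2 + (k−1)/4} · (det L(d₁,...,d_k))^{1/k}. -/
open scoped BigOperators RealInnerProductSpace

/-- The Gram–Schmidt orthogonalization `b₁*, …, bₙ*` of the vectors `b₁, …, bₙ`:
`bᵢ* = bᵢ - ∑_{j<i} μᵢⱼ bⱼ*`. -/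
noncomputable def gso {m n : ℕ} (b : Fin n → EuclideanSpace ℝ (Fin m)) :
    Fin n → EuclideanSpace ℝ (Fin m) :=
  haveI : WellFoundedLT (Fin n) := inferInstance
  InnerProductSpace.gramSchmidt ℝ b

/-- The Gram–Schmidt coefficient `μᵢⱼ = ⟨bᵢ, bⱼ*⟩ / ⟨bⱼ*, bⱼ*⟩`. -/
noncomputable def mu {m n : ℕ} (b : Fin n → EuclideanSpace ℝ (Fin m)) (i j : Fin n) : ℝ :=
  ⟪b i, gso b j⟫ / ⟪gso b j, gso b j⟫

/-- `b₁, …, bₙ` is LLL-reduced: `|μⱼᵢ| ≤ 1/2` for `i < j`, and the exchange condition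
`‖bⱼ* + μ_{j,j-1} b_{j-1}*‖² ≥ (3/4) ‖b_{j-1}*‖²` for consecutive indices `i + 1 = j`. -/
def LLLReduced {m n : ℕ} (b : Fin n → EuclideanSpace ℝ (Fin m)) : Prop :=
  (∀ i j : Fin n, i < j → |mu b j i| ≤ 1 / 2) ∧
  (∀ i j : Fin n, (i : ℕ) + 1 = (j : ℕ) →
    (3 / 4 : ℝ) * ‖gso b i‖ ^ 2 ≤ ‖gso b j + mu b j i • gso b i‖ ^ 2)

/-- Membership in the lattice generated by `b₁, …, bₙ`: an integer linear combination. -/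
def inLattice {m n : ℕ} (b : Fin n → EuclideanSpace ℝ (Fin m))
    (x : EuclideanSpace ℝ (Fin m)) : Prop :=
  ∃ c : Fin n → ℤ, x = ∑ i, (c i : ℝ) • b i

/-- The determinant of the lattice generated by `d₁, …, d_k`:
`√(det DᵀD)`, i.e. the square root of the Gram determinant. -/
noncomputable def latticeDet {m k : ℕ} (d : Fin k → EuclideanSpace ℝ (Fin m)) : ℝ :=
  Real.sqrt (Matrix.det (Matrix.of fun i j => ⟪d i, d j⟫))

/-!
Write `dᵢ = ∑ⱼ cᵢⱼ bⱼ` with an integer matrix `c`. Integer row operations (Euclid's algorithm on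
one column at a time, from the last column down) bring `c` to a row echelon form `v` with pivots
`t₁ < ⋯ < t_k` and the same row lattice, so `c = B v` for an integer matrix `B`. Hence the Gram
determinant of `d` is `(det B)²` times that of `d' = v b`, and in particular at least it. The Gram
determinant of `d'` is `∏ ‖d'ⱼ*‖²`, and `‖d'ⱼ*‖ ≥ ‖b*_{tⱼ}‖` because the last nonzero coefficient of
`d'ⱼ` is a nonzero integer, at `b_{tⱼ}`. Finally the LLL conditions give `‖b₁‖² ≤ 2^{i-1} ‖bᵢ*‖²`,
and `tⱼ ≤ n - k + j`; multiplying over `j` gives `‖b₁‖^{2k} ≤ 2^{k(n-k) + k(k-1)/2} det L(d)²`.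
-/

open Set Submodule Function Matrix InnerProductSpace

theorem Submodule.span_insert_range_update_zero {R M ι : Type*} [Semiring R] [AddCommMonoid M]
    [Module R M] [DecidableEq ι] (c : ι → M) (p : ι) :
    span R (insert (c p) (range (update c p 0))) = span R (range c) := by
  apply le_antisymm <;> rw [span_le]
  · rintro _ (rfl | ⟨i, rfl⟩)
    · exact subset_span ⟨p, rfl⟩
    · rcases eq_or_ne i p with rfl | hi
      · simp
      · rw [update_of_ne hi]
        exact subset_span ⟨i, rfl⟩
  · rintro _ ⟨i, rfl⟩
    rcases eq_or_ne i p with rfl | hi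
    · exact subset_span (mem_insert _ _)
    · exact subset_span (mem_insert_of_mem _ ⟨i, update_of_ne hi _ _⟩)

theorem exists_span_range_eq_and_subsingleton_apply_ne_zero {M ι : Type*} [AddCommGroup M]
    [Fintype ι] [DecidableEq ι] (f : M →ₗ[ℤ] ℤ) (c : ι → M) :
    ∃ c' : ι → M, span ℤ (range c') = span ℤ (range c) ∧ {p | f (c' p) ≠ 0}.Subsingleton := by
  induction h : ∑ q, (f (c q)).natAbs using Nat.strong_induction_on generalizing c with
  | _ N ih =>
  by_cases hc : {p | f (c p) ≠ 0}.Subsingleton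
  · exact ⟨c, rfl, hc⟩
  obtain ⟨p, hp, q, hq, hpq⟩ := not_subsingleton_iff.mp hc
  wlog hle : (f (c p)).natAbs ≤ (f (c q)).natAbs generalizing p q
  · exact this q hq p hp hpq.symm (le_of_not_ge hle)
  set c₁ := update c q (c q - (f (c q) / f (c p)) • c p)
  have hc₁q : f (c₁ q) = f (c q) % f (c p) := by
    simp [c₁, Int.emod_def, mul_comm]
  have hqdec : (f (c₁ q)).natAbs < (f (c q)).natAbs := by
    have := Int.emod_lt (f (c q)) hp
    have := Int.emod_nonneg (f (c q)) hp
    omega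
  have hlt : ∑ i, (f (c₁ i)).natAbs < N := by
    rw [← h]
    refine Finset.sum_lt_sum (fun i _ => ?_) ⟨q, Finset.mem_univ _, ?_⟩
    · rcases eq_or_ne i q with rfl | hi
      · exact hqdec.le
      · simp [c₁, update_of_ne hi]
    · exact hqdec
  obtain ⟨c', hspan, hc'⟩ := ih _ hlt c₁ rfl
  exact ⟨c', hspan.trans (span_range_update_sub_smul hpq c _), hc'⟩

/-- Unlike `Matrix.IsRowEchelon`, the pivot of a row is its *last* nonzero entry: Gram–Schmidt
orthogonalizes each vector against the earlier ones, so this is the shape that bounds `‖(v b)ⱼ*‖`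
below by `‖b*_{t j}‖`. -/
structure IsTrailingEchelon {R : Type*} [Zero R] {r n : ℕ} (v : Fin r → Fin n → R)
    (t : Fin r → Fin n) : Prop where
  strictMono : StrictMono t
  apply_pivot_ne_zero : ∀ j, v j (t j) ≠ 0
  apply_eq_zero_of_pivot_lt : ∀ j i, t j < i → v j i = 0

theorem IsTrailingEchelon.snoc {R : Type*} [Zero R] {r n : ℕ} {v : Fin r → Fin n → R}
    {t : Fin r → Fin n} (h : IsTrailingEchelon v t) {x : Fin n → R} {s : Fin n} (ht : ∀ j, t j < s)
    (hxs : x s ≠ 0) (hx : ∀ i, s < i → x i = 0) :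
    IsTrailingEchelon (Fin.snoc v x) (Fin.snoc t s) where
  strictMono := by
    intro a b hab
    induction b using Fin.lastCases with
    | last =>
      induction a using Fin.lastCases with
      | last => exact absurd hab (lt_irrefl _)
      | cast a => simpa using ht a
    | cast b =>
      induction a using Fin.lastCases with
      | last => exact absurd hab (Fin.castSucc_lt_last b).not_gt
      | cast a => simpa using h.strictMono (Fin.castSucc_lt_castSucc_iff.mp hab)
  apply_pivot_ne_zero j := by
    induction j using Fin.lastCases with
    | last => simpa using hxs
    | cast j => simpa using h.apply_pivot_ne_zero j
  apply_eq_zero_of_pivot_lt j := by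
    induction j using Fin.lastCases with
    | last => simpa using hx
    | cast j => simpa using h.apply_eq_zero_of_pivot_lt j

theorem apply_eq_zero_of_mem_span {R ι : Type*} [Semiring R] {n s : ℕ} {c : ι → Fin n → R}
    (hc : ∀ p (i : Fin n), s ≤ (i : ℕ) → c p i = 0) {x : Fin n → R} (hx : x ∈ span R (range c)) :
    ∀ i : Fin n, s ≤ (i : ℕ) → x i = 0 := by
  have : span R (range c) ≤ Submodule.pi {i : Fin n | s ≤ (i : ℕ)} fun _ => ⊥ := by
    rw [span_le]
    rintro _ ⟨p, rfl⟩
    simpa [Submodule.mem_pi] using hc p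
  simpa [Submodule.mem_pi] using this hx

theorem LinearIndependent.finSnoc_of_apply_ne_zero {R : Type*} [Ring R] [NoZeroDivisors R]
    {r n : ℕ} {v : Fin r → Fin n → R} (hv : LinearIndependent R v) {s : Fin n}
    (hvs : ∀ y ∈ span R (range v), y s = 0) {x : Fin n → R} (hxs : x s ≠ 0) :
    LinearIndependent R (Fin.snoc v x) :=
  hv.finSnoc' _ _ fun a y hy hay => by simpa [hvs y hy, hxs] using congrFun hay s

theorem exists_isTrailingEchelon_of_apply_eq_zero {ι : Type*} [Fintype ι] [DecidableEq ι] {n : ℕ}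
    (s : ℕ) (c : ι → Fin n → ℤ) (hc : ∀ p (i : Fin n), s ≤ (i : ℕ) → c p i = 0) :
    ∃ (r : ℕ) (v : Fin r → Fin n → ℤ) (t : Fin r → Fin n), IsTrailingEchelon v t ∧
      LinearIndependent ℤ v ∧ span ℤ (range v) = span ℤ (range c) := by
  induction s generalizing c with
  | zero =>
    obtain rfl : c = 0 := funext fun p => funext fun i => hc p i (Nat.zero_le _)
    refine ⟨0, Fin.elim0, Fin.elim0, ⟨fun j => j.elim0, fun j => j.elim0, fun j => j.elim0⟩,
      linearIndependent_empty_type, ?_⟩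
    rw [range_eq_empty, span_empty, eq_comm, span_eq_bot]
    rintro _ ⟨p, rfl⟩
    rfl
  | succ s ih =>
    by_cases hsn : n ≤ s
    · exact ih c fun p i hi => absurd (hi.trans_lt i.isLt) (not_lt.mpr hsn)
    set col : Fin n := ⟨s, by omega⟩
    obtain ⟨c', hspan, hsingle⟩ :=
      exists_span_range_eq_and_subsingleton_apply_ne_zero (LinearMap.proj col) c
    have hc' : ∀ p (i : Fin n), s + 1 ≤ (i : ℕ) → c' p i = 0 := fun p =>
      apply_eq_zero_of_mem_span hc (hspan ▸ subset_span ⟨p, rfl⟩)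
    by_cases hcol : ∃ p, c' p col ≠ 0
    swap
    · push Not at hcol
      obtain ⟨r, v, t, hvt, hv, hspan'⟩ := ih c' fun p i hi => by
        rcases hi.eq_or_lt with hi | hi
        · obtain rfl : i = col := Fin.ext hi.symm
          exact hcol p
        · exact hc' p i hi
      exact ⟨r, v, t, hvt, hv, hspan'.trans hspan⟩
    obtain ⟨p, hp⟩ := hcol
    have hzero : ∀ q (i : Fin n), s ≤ (i : ℕ) → update c' p 0 q i = 0 := by
      intro q i hi
      rcases eq_or_ne q p with rfl | hq
      · simp
      rw [update_of_ne hq]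
      rcases hi.eq_or_lt with hi | hi
      · obtain rfl : i = col := Fin.ext hi.symm
        by_contra h
        exact hq (hsingle h hp)
      · exact hc' q i hi
    obtain ⟨r, v, t, hvt, hv, hspan'⟩ := ih _ hzero
    have hv0 : ∀ y ∈ span ℤ (range v), y col = 0 := fun y hy =>
      apply_eq_zero_of_mem_span hzero (hspan' ▸ hy) col le_rfl
    refine ⟨r + 1, Fin.snoc v (c' p), Fin.snoc t col, hvt.snoc (fun j => ?_) hp ?_,
      hv.finSnoc_of_apply_ne_zero hv0 hp, ?_⟩
    · by_contra! h
      exact hvt.apply_pivot_ne_zero j <| apply_eq_zero_of_mem_span hzero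
        (hspan' ▸ subset_span ⟨j, rfl⟩) _ h
    · exact fun i hi => hc' p i hi
    · rw [Fin.range_snoc, span_insert, hspan', ← span_insert, span_insert_range_update_zero, hspan]

theorem exists_isTrailingEchelon_span_range_eq {ι : Type*} [Fintype ι] [DecidableEq ι] {n : ℕ}
    (c : ι → Fin n → ℤ) :
    ∃ (r : ℕ) (v : Fin r → Fin n → ℤ) (t : Fin r → Fin n), IsTrailingEchelon v t ∧
      LinearIndependent ℤ v ∧ span ℤ (range v) = span ℤ (range c) :=
  exists_isTrailingEchelon_of_apply_eq_zero n c fun _ i hi => absurd i.isLt hi.not_gt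

section

variable {E : Type*} [NormedAddCommGroup E] [InnerProductSpace ℝ E]

theorem Matrix.gram_sum_smul {ι κ : Type*} [Fintype κ] (B : Matrix ι κ ℝ) (v : κ → E) :
    gram ℝ (fun i => ∑ j, B i j • v j) = B * gram ℝ v * Bᵀ := by
  ext a c
  simp only [gram_apply, mul_apply, transpose_apply, sum_inner, inner_sum, real_inner_smul_left,
    real_inner_smul_right, Finset.sum_mul]
  exact Finset.sum_congr rfl fun _ _ => Finset.sum_congr rfl fun _ _ => by ring

section GramSchmidt

variable {ι : Type*} [LinearOrder ι] [LocallyFiniteOrderBot ι] [WellFoundedLT ι]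

theorem sub_gramSchmidt_mem_span (b : ι → E) (t : ι) :
    b t - gramSchmidt ℝ b t ∈ span ℝ (b '' Iio t) := by
  rw [← span_gramSchmidt_Iio ℝ b t, sub_eq_iff_eq_add'.mpr (gramSchmidt_def'' ℝ b t)]
  exact sum_mem fun i hi => smul_mem _ _ (subset_span ⟨i, Finset.mem_Iio.mp hi, rfl⟩)

theorem inner_gramSchmidt_eq_zero_of_mem_span (b : ι → E) {t : ι} {y : E}
    (hy : y ∈ span ℝ (b '' Iio t)) : ⟪gramSchmidt ℝ b t, y⟫ = 0 := by
  suffices span ℝ (b '' Iio t) ≤ (ℝ ∙ gramSchmidt ℝ b t)ᗮ from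
    (mem_orthogonal_singleton_iff_inner_right).mp (this hy)
  rw [span_le]
  rintro _ ⟨i, hi, rfl⟩
  exact (mem_orthogonal_singleton_iff_inner_right).mpr (gramSchmidt_inv_triangular ℝ b hi)

theorem abs_mul_norm_gramSchmidt_le (b : ι → E) {t : ι} {x : E} {a : ℝ}
    (h : x - a • b t ∈ span ℝ (b '' Iio t)) : |a| * ‖gramSchmidt ℝ b t‖ ≤ ‖x‖ := by
  set u := gramSchmidt ℝ b t
  have hxu : x - a • u ∈ span ℝ (b '' Iio t) := by
    simpa [smul_sub] using add_mem h (smul_mem _ a (sub_gramSchmidt_mem_span b t))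
  have hinner : ⟪u, x⟫ = a * ‖u‖ ^ 2 := by
    have := inner_gramSchmidt_eq_zero_of_mem_span b hxu
    rwa [inner_sub_right, real_inner_smul_right, real_inner_self_eq_norm_sq, sub_eq_zero] at this
  rcases (norm_nonneg u).eq_or_lt with hu | hu
  · simp [← hu]
  refine le_of_mul_le_mul_right ?_ hu
  calc |a| * ‖u‖ * ‖u‖ = |⟪u, x⟫| := by rw [hinner, abs_mul, abs_of_nonneg (sq_nonneg ‖u‖)]; ring
    _ ≤ ‖u‖ * ‖x‖ := abs_real_inner_le_norm u x
    _ = ‖x‖ * ‖u‖ := mul_comm _ _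

variable [Fintype ι]

theorem det_gram_eq_prod_norm_gramSchmidt_sq (f : ι → E) :
    (gram ℝ f).det = ∏ i, ‖gramSchmidt ℝ f i‖ ^ 2 := by
  classical
  set g := gramSchmidt ℝ f
  set T : Matrix ι ι ℝ :=
    of fun j i => if i = j then 1 else if i < j then ⟪g i, f j⟫ / ‖g i‖ ^ 2 else 0
  have hf : f = fun j => ∑ i, T j i • g i := by
    ext1 j
    have hterm : ∀ i, T j i • g i =
        (if i = j then g i else 0) + if i < j then (⟪g i, f j⟫ / ‖g i‖ ^ 2) • g i else 0 := by
      intro i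
      rcases lt_trichotomy i j with h | rfl | h
      · simp [T, h, h.ne]
      · simp [T]
      · simp [T, h.ne', h.not_gt]
    rw [Finset.sum_congr rfl fun i _ => hterm i, Finset.sum_add_distrib, Finset.sum_ite_eq',
      if_pos (Finset.mem_univ _), ← Finset.sum_filter, Finset.filter_gt_eq_Iio]
    exact gramSchmidt_def'' ℝ f j
  have hg : gram ℝ g = diagonal fun i => ‖g i‖ ^ 2 := by
    ext i j
    rcases eq_or_ne i j with rfl | hij
    · simp [gram_apply]
    · simp [gram_apply, hij, gramSchmidt_orthogonal ℝ f hij, g]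
  have hT : T.det = 1 := by
    rw [det_of_isLowerTriangular]
    · simp [T]
    · intro j i (hji : j < i)
      simp [T, hji.ne', hji.not_gt]
  rw [show gram ℝ f = gram ℝ (fun j => ∑ i, T j i • g i) from congrArg _ hf, gram_sum_smul, hg,
    det_mul, det_mul, det_transpose, hT, det_diagonal, one_mul, mul_one]

end GramSchmidt

theorem det_gram_le_of_eq_sum_intCast_smul {κ : Type*} [Fintype κ] [DecidableEq κ] {d d' : κ → E}
    (B : Matrix κ κ ℤ) (hdd' : ∀ i, d i = ∑ j, (B i j : ℝ) • d' j) (hd : LinearIndependent ℝ d) :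
    (gram ℝ d').det ≤ (gram ℝ d).det := by
  have hdet : (gram ℝ d).det = (B.det : ℝ) ^ 2 * (gram ℝ d').det := by
    have hG := gram_sum_smul (B.map ((↑) : ℤ → ℝ)) d'
    simp only [map_apply, ← hdd'] at hG
    rw [hG, det_mul, det_mul, det_transpose, ← Int.cast_det]
    ring
  have hpos := (posDef_gram_of_linearIndependent hd).det_pos
  have hB : B.det ≠ 0 := by
    rintro h
    rw [hdet, h, Int.cast_zero] at hpos
    simp at hpos
  have hB1 : (1 : ℝ) ≤ (B.det : ℝ) ^ 2 := by
    have : (1 : ℤ) ≤ B.det ^ 2 := by nlinarith [Int.one_le_abs hB, sq_abs B.det]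
    exact_mod_cast this
  nlinarith [(posSemidef_gram ℝ d').det_nonneg]

theorem sum_smul_mem_span_Iio {ι : Type*} [Preorder ι] (b : ι → E) (w : ι → ℝ) (S : Finset ι)
    {s : ι} (hw : ∀ i ∈ S, w i ≠ 0 → i < s) : ∑ i ∈ S, w i • b i ∈ span ℝ (b '' Iio s) := by
  refine sum_mem fun i hi => ?_
  by_cases hwi : w i = 0
  · simp [hwi]
  · exact smul_mem _ _ (subset_span ⟨i, hw i hi hwi, rfl⟩)

theorem IsTrailingEchelon.norm_gramSchmidt_le {r n : ℕ} {v : Fin r → Fin n → ℤ} {t : Fin r → Fin n}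
    (h : IsTrailingEchelon v t) (b : Fin n → E) (j : Fin r) :
    ‖gramSchmidt ℝ b (t j)‖ ≤ ‖gramSchmidt ℝ (fun j => ∑ i, (v j i : ℝ) • b i) j‖ := by
  set d := fun j => ∑ i, (v j i : ℝ) • b i
  have hsupp : ∀ p, ∀ i, (v p i : ℝ) ≠ 0 → i ≤ t p := fun p i hi =>
    not_lt.mp fun hlt => hi (by simp [h.apply_eq_zero_of_pivot_lt p i hlt])
  have hd : span ℝ (d '' Iio j) ≤ span ℝ (b '' Iio (t j)) := by
    rw [span_le]
    rintro _ ⟨p, hp, rfl⟩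
    exact sum_smul_mem_span_Iio b _ _ fun i _ hi => (hsupp p i hi).trans_lt (h.strictMono hp)
  have hdj : d j - (v j (t j) : ℝ) • b (t j) ∈ span ℝ (b '' Iio (t j)) := by
    rw [show d j = _ from (Finset.add_sum_erase _ _ (Finset.mem_univ (t j))).symm,
      add_sub_cancel_left]
    exact sum_smul_mem_span_Iio b _ _ fun i hi hvi =>
      (hsupp j i hvi).lt_of_ne (Finset.ne_of_mem_erase hi)
  have hmem : gramSchmidt ℝ d j - (v j (t j) : ℝ) • b (t j) ∈ span ℝ (b '' Iio (t j)) := by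
    have := sub_mem hdj (hd (sub_gramSchmidt_mem_span d j))
    rwa [sub_sub_sub_cancel_left] at this
  have hpivot : (1 : ℝ) ≤ |(v j (t j) : ℝ)| := by
    exact_mod_cast Int.one_le_abs (h.apply_pivot_ne_zero j)
  calc ‖gramSchmidt ℝ b (t j)‖ ≤ |(v j (t j) : ℝ)| * ‖gramSchmidt ℝ b (t j)‖ :=
        le_mul_of_one_le_left (norm_nonneg _) hpivot
    _ ≤ ‖gramSchmidt ℝ d j‖ := abs_mul_norm_gramSchmidt_le b hmem

theorem exists_isTrailingEchelon_det_gram_le {n k : ℕ} (b : Fin n → E) (d : Fin k → E)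
    (hd : LinearIndependent ℝ d) (hdL : ∀ i, ∃ c : Fin n → ℤ, d i = ∑ j, (c j : ℝ) • b j) :
    ∃ (v : Fin k → Fin n → ℤ) (t : Fin k → Fin n), IsTrailingEchelon v t ∧
      (gram ℝ fun j => ∑ i, (v j i : ℝ) • b i).det ≤ (gram ℝ d).det := by
  choose c hc using hdL
  set φ : (Fin n → ℤ) →ₗ[ℤ] E := Fintype.linearCombination ℤ b
  have hφ : ∀ x, φ x = ∑ i, (x i : ℝ) • b i := fun x => by
    simp [φ, Fintype.linearCombination_apply, Int.cast_smul_eq_zsmul]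
  have hdc : d = φ ∘ c := funext fun i => (hc i).trans (hφ (c i)).symm
  have hcli : LinearIndependent ℤ c := (hdc ▸ hd.restrict_scalars' ℤ).of_comp φ
  obtain ⟨r, v, t, hvt, hv, hspan⟩ := exists_isTrailingEchelon_span_range_eq c
  obtain rfl : r = k := by
    have := finrank_span_eq_card hv
    rw [hspan, finrank_span_eq_card hcli] at this
    simpa using this.symm
  have hcv : ∀ p, c p ∈ span ℤ (range v) := fun p => hspan ▸ subset_span ⟨p, rfl⟩
  choose B hB using fun p => (mem_span_range_iff_exists_fun ℤ).mp (hcv p)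
  refine ⟨v, t, hvt, det_gram_le_of_eq_sum_intCast_smul (Matrix.of B) (fun p => ?_) hd⟩
  simp only [hdc, Function.comp_apply, ← hB p, map_sum, map_smul]
  simp only [of_apply, Int.cast_smul_eq_zsmul, hφ]

end

theorem LLLReduced.sq_norm_gso_le_two_mul {m n : ℕ} {b : Fin n → EuclideanSpace ℝ (Fin m)}
    (hred : LLLReduced b) {i j : Fin n} (hij : (i : ℕ) + 1 = j) :
    ‖gso b i‖ ^ 2 ≤ 2 * ‖gso b j‖ ^ 2 := by
  have hμ : mu b j i ^ 2 ≤ 1 / 4 := by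
    have := hred.1 i j (by rw [Fin.lt_def]; omega)
    rw [← sq_abs]
    nlinarith [abs_nonneg (mu b j i)]
  have horth : ⟪gso b j, mu b j i • gso b i⟫ = 0 := by
    rw [real_inner_smul_right, gso, gramSchmidt_orthogonal ℝ b (by rw [Ne, Fin.ext_iff]; omega),
      mul_zero]
  have hexch := hred.2 i j hij
  rw [norm_add_sq_real, horth, norm_smul, mul_pow, Real.norm_eq_abs, sq_abs] at hexch
  nlinarith [sq_nonneg ‖gso b i‖]

theorem LLLReduced.sq_norm_le_two_pow_mul_sq_norm_gso {m n : ℕ}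
    {b : Fin n → EuclideanSpace ℝ (Fin m)} (hred : LLLReduced b) (hn : 0 < n) (i : Fin n) :
    ‖b ⟨0, hn⟩‖ ^ 2 ≤ 2 ^ (i : ℕ) * ‖gso b i‖ ^ 2 := by
  obtain ⟨i, hi⟩ := i
  induction i with
  | zero =>
    have : gso b ⟨0, hn⟩ = b ⟨0, hn⟩ := by
      rw [gso, gramSchmidt_def, Finset.Iio_eq_empty.mpr fun x _ => Nat.zero_le x.val,
        Finset.sum_empty, sub_zero]
    simp [this]
  | succ i ih =>
    calc ‖b ⟨0, hn⟩‖ ^ 2 ≤ 2 ^ i * ‖gso b ⟨i, by omega⟩‖ ^ 2 := ih (by omega)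
      _ ≤ 2 ^ i * (2 * ‖gso b ⟨i + 1, hi⟩‖ ^ 2) := by
        gcongr
        exact hred.sq_norm_gso_le_two_mul rfl
      _ = 2 ^ (i + 1) * ‖gso b ⟨i + 1, hi⟩‖ ^ 2 := by ring

theorem StrictMono.val_add_le {k n : ℕ} {t : Fin k → Fin n} (ht : StrictMono t) (j : Fin k) :
    (t j : ℕ) + k ≤ n + j := by
  have := Finset.card_le_card_of_injOn t (s := Finset.Ioi j) (t := Finset.Ioi (t j))
    (fun p hp => by simpa using ht (Finset.mem_Ioi.mp hp)) ht.injective.injOn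
  simp only [Fin.card_Ioi] at this
  omega

theorem LLLReduced.sq_norm_le_two_pow_mul_sq_norm_gramSchmidt {m n k : ℕ}
    {b : Fin n → EuclideanSpace ℝ (Fin m)} (hred : LLLReduced b) (hn : 0 < n)
    {v : Fin k → Fin n → ℤ} {t : Fin k → Fin n} (hvt : IsTrailingEchelon v t) (j : Fin k) :
    ‖b ⟨0, hn⟩‖ ^ 2 ≤
      2 ^ (n - k + (j : ℕ)) * ‖gramSchmidt ℝ (fun j => ∑ i, (v j i : ℝ) • b i) j‖ ^ 2 :=
  calc ‖b ⟨0, hn⟩‖ ^ 2 ≤ 2 ^ (t j : ℕ) * ‖gso b (t j)‖ ^ 2 :=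
        hred.sq_norm_le_two_pow_mul_sq_norm_gso hn (t j)
    _ ≤ _ := by
        have := hvt.strictMono.val_add_le j
        gcongr
        · exact one_le_two
        · omega
        · exact hvt.norm_gramSchmidt_le b j

theorem le_two_rpow_mul_rpow_of_pow_le {x D : ℝ} {n k : ℕ} (hk : 1 ≤ k) (hkn : k ≤ n)
    (hx : 0 ≤ x) (hD : 0 ≤ D) (h : x ^ (2 * k) ≤ 2 ^ (∑ j : Fin k, (n - k + (j : ℕ))) * D ^ 2) :
    x ≤ 2 ^ ((((n : ℝ) - k) / 2) + (((k : ℝ) - 1) / 4)) * D ^ ((1 : ℝ) / k) := by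
  have hsum : ((∑ j : Fin k, (n - k + (j : ℕ)) : ℕ) : ℝ) = k * (n - k) + k * (k - 1) / 2 := by
    have hgauss := Finset.sum_range_id_mul_two k
    rw [← Fin.sum_univ_eq_sum_range] at hgauss
    rw [Finset.sum_add_distrib, Finset.sum_const, Finset.card_univ, Fintype.card_fin, smul_eq_mul]
    have : ((∑ j : Fin k, (j : ℕ) : ℕ) : ℝ) = k * (k - 1) / 2 := by
      rw [eq_div_iff two_ne_zero, ← Nat.cast_pred hk]
      exact_mod_cast hgauss
    push_cast [Nat.cast_sub hkn] at this ⊢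
    rw [this]
  have hrhs : 2 ^ ((((n : ℝ) - k) / 2) + (((k : ℝ) - 1) / 4)) * D ^ ((1 : ℝ) / k) =
      ((2 : ℝ) ^ (∑ j : Fin k, (n - k + (j : ℕ))) * D ^ 2) ^ ((2 * k : ℝ)⁻¹) := by
    rw [Real.mul_rpow (by positivity) (by positivity), ← Real.rpow_natCast 2, hsum,
      ← Real.rpow_natCast D, ← Real.rpow_mul zero_le_two, ← Real.rpow_mul hD]
    congr 2 <;> field_simp <;> ring
  rw [hrhs, Real.le_rpow_inv_iff_of_pos hx (by positivity) (by positivity)]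
  exact_mod_cast h

theorem norm_b1_le_sublattice_det {m n k : ℕ} (hk1 : 1 ≤ k) (hkn : k ≤ n)
    (b : Fin n → EuclideanSpace ℝ (Fin m))
    (hred : LLLReduced b)
    (d : Fin k → EuclideanSpace ℝ (Fin m))
    (hd : LinearIndependent ℝ d) (hdL : ∀ i, inLattice b (d i)) :
    ‖b ⟨0, by omega⟩‖ ≤
      2 ^ ((((n : ℝ) - k) / 2) + (((k : ℝ) - 1) / 4)) * latticeDet d ^ ((1 : ℝ) / k) := by
  have hn : 0 < n := by omega
  obtain ⟨v, t, hvt, hdet⟩ := exists_isTrailingEchelon_det_gram_le b d hd hdL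
  set d' := fun j => ∑ i, (v j i : ℝ) • b i
  have hlatticeDet : latticeDet d ^ 2 = (gram ℝ d).det :=
    Real.sq_sqrt (posSemidef_gram ℝ d).det_nonneg
  refine le_two_rpow_mul_rpow_of_pow_le hk1 hkn (norm_nonneg _) (Real.sqrt_nonneg _) ?_
  calc ‖b ⟨0, hn⟩‖ ^ (2 * k) = ∏ _j : Fin k, ‖b ⟨0, hn⟩‖ ^ 2 := by
        rw [Finset.prod_const, Finset.card_univ, Fintype.card_fin, ← pow_mul]
    _ ≤ ∏ j : Fin k, 2 ^ (n - k + (j : ℕ)) * ‖gramSchmidt ℝ d' j‖ ^ 2 :=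
        Finset.prod_le_prod (fun _ _ => by positivity) fun j _ =>
          hred.sq_norm_le_two_pow_mul_sq_norm_gramSchmidt hn hvt j
    _ = 2 ^ (∑ j : Fin k, (n - k + (j : ℕ))) * (gram ℝ d').det := by
        rw [Finset.prod_mul_distrib, Finset.prod_pow_eq_pow_sum,
          det_gram_eq_prod_norm_gramSchmidt_sq]
    _ ≤ 2 ^ (∑ j : Fin k, (n - k + (j : ℕ))) * latticeDet d ^ 2 := by
        rw [hlatticeDet]
        exact mul_le_mul_of_nonneg_left hdet (by positivity)
end

section
/- Let b₁,...,bₙ ∈ ℝ^m be an arbitrary basis of the lattice L with Gram–Schmidt vectors b₁*,...,bₙ*, and let d₁,...,d_k be linearly independent vectors from L. Then det L(d₁,...,d_k) ≥ min over all index sets 1 ≤ i₁ < i₂ < ... < i_k ≤ n of the product ‖b_{i₁}*‖·‖b_{i₂}*‖⋯‖b_{i_k}*‖. -/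
open scoped BigOperators RealInnerProductSpace

/-!
Write `dᵢ = ∑ⱼ Cᵢⱼ bⱼ` with an integer matrix `C` of rank `k`. Real row operations `U` bring `C`
to an echelon form in which row `i` of `U C` ends at a nonzero entry in column `σ i`, with `σ`
strictly increasing. For `e = U d`, the functional `⟪b*_{σ i}, ·⟫` vanishes on every `eⱼ` with
`j < i` and hence does not see the Gram–Schmidt correction of `eᵢ`, which gives
`‖eᵢ*‖ ≥ |(U C)_{i, σ i}| ‖b*_{σ i}‖`. As `det Gram(e) = ∏ ‖eᵢ*‖²`, multiplying over `i` yields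
`(det U)² (det C_σ)² ∏ ‖b*_{σ i}‖² ≤ det Gram(e) = (det U)² det Gram(d)`, and `det C_σ` is a
nonzero integer.
-/

open Finset InnerProductSpace Matrix

theorem Fin.strictMono_snoc {α : Type*} [Preorder α] {k : ℕ} {f : Fin k → α}
    (hf : StrictMono f) {x : α} (hx : ∀ i, f i < x) :
    StrictMono (Fin.snoc (α := fun _ ↦ α) f x) := by
  intro a b hab
  induction b using Fin.lastCases with
  | last =>
    obtain ⟨a, rfl⟩ := Fin.exists_castSucc_eq.mpr hab.ne
    simpa using hx a
  | cast b =>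
    obtain ⟨a, rfl⟩ := Fin.exists_castSucc_eq.mpr (hab.trans (Fin.castSucc_lt_last b)).ne
    simpa using hf (Fin.castSucc_lt_castSucc_iff.mp hab)

theorem LinearIndependent.succAbove_sub_smul {R M : Type*} [Ring R] [AddCommGroup M] [Module R M]
    {k : ℕ} {v : Fin (k + 1) → M} (hv : LinearIndependent R v) (i₀ : Fin (k + 1))
    (r : Fin k → R) : LinearIndependent R fun j ↦ v (i₀.succAbove j) - r j • v i₀ := by
  rw [Fintype.linearIndependent_iff] at hv ⊢
  intro a ha j
  have h := hv (i₀.insertNth (-∑ j, a j * r j) a) ?_ (i₀.succAbove j)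
  · simpa using h
  rw [Fin.sum_univ_succAbove _ i₀, ← ha]
  simp only [Fin.insertNth_apply_same, Fin.insertNth_apply_succAbove, smul_sub,
    Finset.sum_sub_distrib, smul_smul, neg_smul, Finset.sum_smul]
  abel

namespace Matrix

def IsTrailingEntry {m n R : Type*} [Zero R] [LT n] (A : Matrix m n R) (i : m) (c : n) : Prop :=
  (∀ j, c < j → A i j = 0) ∧ A i c ≠ 0

theorem exists_ne_zero_forall_lt_eq_zero {m n R : Type*} [Zero R] [Fintype m] [Fintype n]
    [LinearOrder n] {C : Matrix m n R} (hC : C ≠ 0) :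
    ∃ i₀ l₀, C i₀ l₀ ≠ 0 ∧ ∀ i l, l₀ < l → C i l = 0 := by
  classical
  obtain ⟨i, l, hl⟩ : ∃ i l, C i l ≠ 0 := by
    by_contra! h
    exact hC (Matrix.ext h)
  obtain ⟨⟨i₀, l₀⟩, hp, hmax⟩ :=
    Finset.exists_max_image {p : m × n | C p.1 p.2 ≠ 0} Prod.snd ⟨(i, l), by simpa using hl⟩
  refine ⟨i₀, l₀, by simpa using hp, fun i l hl ↦ ?_⟩
  by_contra h
  exact (hmax (i, l) (by simpa using h)).not_gt hl

theorem exists_strictMono_isTrailingEntry_mul {K n : Type*} [Field K] [Fintype n]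
    [LinearOrder n] :
    ∀ {k : ℕ} (C : Matrix (Fin k) n K), LinearIndependent K C →
      ∃ (U : Matrix (Fin k) (Fin k) K) (σ : Fin k → n),
        StrictMono σ ∧ ∀ i, (U * C).IsTrailingEntry i (σ i)
  | 0, _, _ => ⟨1, finZeroElim, fun i ↦ i.elim0, fun i ↦ i.elim0⟩
  | k + 1, C, hC => by
    obtain ⟨i₀, l₀, hpiv, hzero⟩ :=
      exists_ne_zero_forall_lt_eq_zero fun h ↦ hC.ne_zero 0 (congrFun h 0)
    -- row `i₀` becomes the last row; the rows `D` clear column `l₀` with it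
    set D : Matrix (Fin k) n K :=
      of fun j ↦ C (i₀.succAbove j) - (C (i₀.succAbove j) l₀ / C i₀ l₀) • C i₀
    have hD : ∀ j l, l₀ ≤ l → D j l = 0 := by
      intro j l hl
      rcases hl.eq_or_lt with rfl | hl
      · simp [D, div_mul_cancel₀ _ hpiv]
      · simp [D, hzero _ _ hl]
    obtain ⟨U', σ', hσ', hU'⟩ :=
      exists_strictMono_isTrailingEntry_mul D (hC.succAbove_sub_smul i₀ _)
    have hσ'l₀ : ∀ j, σ' j < l₀ := fun j ↦ by
      by_contra! h
      exact (hU' j).2 (by simp [mul_apply, hD _ _ h])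
    set E : Matrix (Fin k) (Fin (k + 1)) K := of fun j ↦
      Pi.single (i₀.succAbove j) 1 - (C (i₀.succAbove j) l₀ / C i₀ l₀) • Pi.single i₀ 1
    have hEC : E * C = D := by
      ext j l
      simp [E, D, mul_apply, sub_mul, Finset.sum_sub_distrib, Pi.single_apply]
    set U : Matrix (Fin (k + 1)) (Fin (k + 1)) K :=
      of (Fin.snoc (α := fun _ ↦ Fin (k + 1) → K) (fun j ↦ (U' * E) j) (Pi.single i₀ 1))
    refine ⟨U, Fin.snoc (α := fun _ ↦ n) σ' l₀, Fin.strictMono_snoc hσ' hσ'l₀, fun i ↦ ?_⟩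
    induction i using Fin.lastCases with
    | last =>
      have hrow : (U * C) (Fin.last k) = C i₀ := by
        ext l
        simp only [U, mul_apply, of_apply, Fin.snoc_last]
        simp [Pi.single_apply]
      simpa [IsTrailingEntry, hrow] using ⟨hzero i₀, hpiv⟩
    | cast j =>
      have hrow : (U * C) j.castSucc = (U' * D) j := by
        ext l
        simp only [U, ← hEC, ← Matrix.mul_assoc, mul_apply (M := of _), of_apply,
          Fin.snoc_castSucc, mul_apply (M := U' * E)]
      simpa [IsTrailingEntry, hrow] using hU' j

theorem det_submatrix_eq_prod {R κ ι : Type*} [CommRing R] [Fintype κ] [LinearOrder κ]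
    [Preorder ι] {A : Matrix κ ι R} {σ : κ → ι} (hσ : StrictMono σ)
    (hA : ∀ i l, σ i < l → A i l = 0) :
    (A.submatrix id σ).det = ∏ i, A i (σ i) :=
  det_of_isLowerTriangular _ fun i j (h : i < j) ↦ hA i (σ j) (hσ h)

theorem gram_sum_smul_s7 {E ι κ : Type*} [NormedAddCommGroup E] [InnerProductSpace ℝ E] [Fintype ι]
    (A : Matrix κ ι ℝ) (v : ι → E) :
    gram ℝ (fun i ↦ ∑ l, A i l • v l) = A * gram ℝ v * Aᵀ := by
  ext i j
  simp only [gram_apply, sum_inner, inner_sum, real_inner_smul_left, real_inner_smul_right,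
    mul_apply, transpose_apply, Finset.sum_mul]
  exact Finset.sum_congr rfl fun _ _ ↦ Finset.sum_congr rfl fun _ _ ↦ by ring

end Matrix

namespace InnerProductSpace

variable {E : Type*} [NormedAddCommGroup E] [InnerProductSpace ℝ E]
variable {ι : Type*} [LinearOrder ι] [LocallyFiniteOrderBot ι] [WellFoundedLT ι]

theorem inner_gramSchmidt_self (f : ι → E) (i : ι) :
    ⟪gramSchmidt ℝ f i, f i⟫ = ‖gramSchmidt ℝ f i‖ ^ 2 := by
  conv_lhs => rw [gramSchmidt_def'' ℝ f i]
  rw [inner_add_right, real_inner_self_eq_norm_sq, inner_sum, add_eq_left]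
  refine Finset.sum_eq_zero fun j hj ↦ ?_
  rw [real_inner_smul_right, gramSchmidt_orthogonal ℝ f (Finset.mem_Iio.mp hj).ne', mul_zero]

theorem inner_gramSchmidt_eq_of_forall_lt {f : ι → E} {i : ι} {y : E}
    (h : ∀ j < i, ⟪y, f j⟫ = 0) : ⟪y, gramSchmidt ℝ f i⟫ = ⟪y, f i⟫ := by
  have hspan : Submodule.span ℝ (f '' Set.Iio i) ≤ (ℝ ∙ y)ᗮ :=
    Submodule.span_le.mpr <| by
      rintro _ ⟨j, hj, rfl⟩
      exact Submodule.mem_orthogonal_singleton_iff_inner_right.mpr (h j hj)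
  have hperp : ∀ j < i, ⟪y, gramSchmidt ℝ f j⟫ = 0 := fun j hj ↦
    Submodule.mem_orthogonal_singleton_iff_inner_right.mp <| hspan <|
      span_gramSchmidt_Iio ℝ f i ▸ Submodule.subset_span ⟨j, hj, rfl⟩
  conv_rhs => rw [gramSchmidt_def'' ℝ f i]
  rw [inner_add_right, inner_sum, left_eq_add]
  refine Finset.sum_eq_zero fun j hj ↦ ?_
  rw [real_inner_smul_right, hperp j (Finset.mem_Iio.mp hj), mul_zero]

noncomputable def gramSchmidtCoeff (f : ι → E) : Matrix ι ι ℝ :=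
  of fun i l ↦
    if l < i then ⟪gramSchmidt ℝ f l, f i⟫ / ‖gramSchmidt ℝ f l‖ ^ 2 else if l = i then 1 else 0

theorem det_gramSchmidtCoeff [Fintype ι] (f : ι → E) : (gramSchmidtCoeff f).det = 1 := by
  rw [det_of_isLowerTriangular _ fun i l (h : i < l) ↦ by
    simp [gramSchmidtCoeff, h.not_gt, h.ne']]
  simp [gramSchmidtCoeff]

theorem sum_gramSchmidtCoeff_smul [Fintype ι] (f : ι → E) (i : ι) :
    ∑ l, gramSchmidtCoeff f i l • gramSchmidt ℝ f l = f i := by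
  conv_rhs => rw [gramSchmidt_def'' ℝ f i]
  simp [gramSchmidtCoeff, ite_smul, Finset.sum_ite, Finset.filter_gt_eq_Iio, add_comm]

theorem det_gram_eq_prod_norm_gramSchmidt_sq [Fintype ι] (f : ι → E) :
    (gram ℝ f).det = ∏ i, ‖gramSchmidt ℝ f i‖ ^ 2 := by
  have hgram : gram ℝ f =
      gramSchmidtCoeff f * gram ℝ (gramSchmidt ℝ f) * (gramSchmidtCoeff f)ᵀ := by
    rw [← gram_sum_smul_s7]
    exact congrArg _ (funext fun i ↦ (sum_gramSchmidtCoeff_smul f i).symm)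
  have hdiag : gram ℝ (gramSchmidt ℝ f) = diagonal fun i ↦ ‖gramSchmidt ℝ f i‖ ^ 2 := by
    ext i j
    rcases eq_or_ne i j with rfl | h
    · simp
    · simp [h, gramSchmidt_orthogonal ℝ f h]
  rw [hgram, det_mul, det_mul, det_transpose, det_gramSchmidtCoeff, hdiag, det_diagonal]
  ring

variable {κ : Type*} [LinearOrder κ] [LocallyFiniteOrderBot κ] [WellFoundedLT κ]

theorem abs_mul_norm_gramSchmidt_le [Fintype ι] (b : ι → E) {A : Matrix κ ι ℝ} {σ : κ → ι}
    (hσ : StrictMono σ) (hA : ∀ i l, σ i < l → A i l = 0) (i : κ) :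
    |A i (σ i)| * ‖gramSchmidt ℝ b (σ i)‖ ≤ ‖gramSchmidt ℝ (fun i ↦ ∑ l, A i l • b l) i‖ := by
  set e : κ → E := fun i ↦ ∑ l, A i l • b l
  set g := gramSchmidt ℝ b (σ i)
  have hinner : ∀ j, ⟪g, e j⟫ = ∑ l, A j l * ⟪g, b l⟫ := fun j ↦ by
    simp only [e, inner_sum, real_inner_smul_right]
  have hlt : ∀ j < i, ⟪g, e j⟫ = 0 := by
    intro j hj
    rw [hinner]
    refine Finset.sum_eq_zero fun l _ ↦ ?_
    rcases lt_or_ge (σ j) l with h | h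
    · rw [hA j l h, zero_mul]
    · rw [gramSchmidt_inv_triangular ℝ b (h.trans_lt (hσ hj)), mul_zero]
  have hself : ⟪g, e i⟫ = A i (σ i) * ‖g‖ ^ 2 := by
    rw [hinner, Finset.sum_eq_single (σ i), inner_gramSchmidt_self]
    · intro l _ hl
      rcases hl.lt_or_gt with h | h
      · rw [gramSchmidt_inv_triangular ℝ b h, mul_zero]
      · rw [hA i l h, zero_mul]
    · simp
  have hcs : |A i (σ i)| * ‖g‖ * ‖g‖ ≤ ‖gramSchmidt ℝ e i‖ * ‖g‖ :=
    calc |A i (σ i)| * ‖g‖ * ‖g‖ = |⟪g, gramSchmidt ℝ e i⟫| := by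
          rw [inner_gramSchmidt_eq_of_forall_lt hlt, hself, abs_mul, abs_of_nonneg (sq_nonneg ‖g‖)]
          ring
      _ ≤ ‖g‖ * ‖gramSchmidt ℝ e i‖ := abs_real_inner_le_norm _ _
      _ = ‖gramSchmidt ℝ e i‖ * ‖g‖ := mul_comm _ _
  rcases (norm_nonneg g).eq_or_lt with h | h
  · rw [← h, mul_zero]
    exact norm_nonneg _
  · exact le_of_mul_le_mul_right hcs h

theorem det_submatrix_sq_mul_prod_le_det_gram [Fintype ι] [Fintype κ] (b : ι → E)
    {A : Matrix κ ι ℝ} {σ : κ → ι} (hσ : StrictMono σ) (hA : ∀ i l, σ i < l → A i l = 0) :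
    (A.submatrix id σ).det ^ 2 * ∏ i, ‖gramSchmidt ℝ b (σ i)‖ ^ 2 ≤
      (gram ℝ fun i ↦ ∑ l, A i l • b l).det := by
  rw [det_gram_eq_prod_norm_gramSchmidt_sq, det_submatrix_eq_prod hσ hA, ← Finset.prod_pow,
    ← Finset.prod_mul_distrib]
  refine Finset.prod_le_prod (fun _ _ ↦ by positivity) fun i _ ↦ ?_
  rw [← sq_abs, ← mul_pow]
  exact pow_le_pow_left₀ (by positivity) (abs_mul_norm_gramSchmidt_le b hσ hA i) 2

theorem exists_det_submatrix_sq_mul_prod_le_det_gram [Fintype ι] {k : ℕ} (b : ι → E)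
    {C : Matrix (Fin k) ι ℝ} (hC : LinearIndependent ℝ C) :
    ∃ σ : Fin k → ι, StrictMono σ ∧ (C.submatrix id σ).det ≠ 0 ∧
      (C.submatrix id σ).det ^ 2 * ∏ i, ‖gramSchmidt ℝ b (σ i)‖ ^ 2 ≤
        (gram ℝ fun i ↦ ∑ l, C i l • b l).det := by
  obtain ⟨U, σ, hσ, hUC⟩ := C.exists_strictMono_isTrailingEntry_mul hC
  have hvanish : ∀ i l, σ i < l → (U * C) i l = 0 := fun i ↦ (hUC i).1
  have hsub : (U * C).submatrix id σ = U * C.submatrix id σ :=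
    submatrix_mul U C id id σ Function.bijective_id
  have hpiv : U.det * (C.submatrix id σ).det ≠ 0 := by
    rw [← det_mul, ← hsub, det_submatrix_eq_prod hσ hvanish]
    exact Finset.prod_ne_zero_iff.mpr fun i _ ↦ (hUC i).2
  have hgram : (gram ℝ fun i ↦ ∑ l, (U * C) i l • b l) =
      U * (gram ℝ fun i ↦ ∑ l, C i l • b l) * Uᵀ := by
    rw [← gram_sum_smul_s7]
    congr 1
    funext i
    simp only [mul_apply, Finset.sum_smul, Finset.smul_sum, smul_smul]
    exact Finset.sum_comm
  have key := det_submatrix_sq_mul_prod_le_det_gram b hσ hvanish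
  rw [hsub, hgram, det_mul, det_mul, det_mul, det_transpose] at key
  refine ⟨σ, hσ, right_ne_zero_of_mul hpiv, le_of_mul_le_mul_left ?_
    (pow_pos (abs_pos.mpr (left_ne_zero_of_mul hpiv)) 2)⟩
  rw [sq_abs]
  linear_combination key

end InnerProductSpace

theorem sublattice_det_ge_min_prod_gso_general {m n k : ℕ}
    (b : Fin n → EuclideanSpace ℝ (Fin m))
    (d : Fin k → EuclideanSpace ℝ (Fin m))
    (hd : LinearIndependent ℝ d) (hdL : ∀ i, inLattice b (d i)) :
    ∃ t : Fin k → Fin n, StrictMono t ∧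
      ∏ i : Fin k, ‖gso b (t i)‖ ≤ latticeDet d := by
  choose c hc using hdL
  set C : Matrix (Fin k) (Fin n) ℝ := (of c).map (↑)
  have hdC : d = fun i ↦ ∑ j, C i j • b j := funext hc
  have hC : LinearIndependent ℝ C := by
    refine .of_comp (Fintype.linearCombination ℝ b) ?_
    convert hd using 1
    exact funext fun i ↦ (Fintype.linearCombination_apply ℝ b (C i)).trans (congrFun hdC i).symm
  obtain ⟨t, ht, hdet, hle⟩ := exists_det_submatrix_sq_mul_prod_le_det_gram b hC
  have hone : 1 ≤ (C.submatrix id t).det ^ 2 := by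
    rw [show C.submatrix id t = ((of c).submatrix id t).map (↑) from rfl, ← Int.cast_det] at hdet ⊢
    rw [one_le_sq_iff_one_le_abs, ← Int.cast_abs]
    exact_mod_cast Int.one_le_abs (by exact_mod_cast hdet)
  refine ⟨t, ht, ?_⟩
  rw [latticeDet, ← Real.sqrt_sq (Finset.prod_nonneg fun _ _ ↦ norm_nonneg _), ← Finset.prod_pow]
  refine Real.sqrt_le_sqrt ?_
  rw [← hdC] at hle
  exact (le_mul_of_one_le_left (by positivity) hone).trans hle

theorem sublattice_det_ge_min_prod_gso {m n k : ℕ}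
    (b : Fin n → EuclideanSpace ℝ (Fin m))
    (hb : LinearIndependent ℝ b)
    (d : Fin k → EuclideanSpace ℝ (Fin m))
    (hd : LinearIndependent ℝ d) (hdL : ∀ i, inLattice b (d i)) :
    ∃ t : Fin k → Fin n, StrictMono t ∧
      ∏ i : Fin k, ‖gso b (t i)‖ ≤ latticeDet d :=
  sublattice_det_ge_min_prod_gso_general b d hd hdL
end

section
/- Let b₁,...,bₙ ∈ ℝ^m be a basis of the lattice L, and let d₁,...,d_k be linearly independent vectors from L. Then there exists a k×k unimodular matrix U (an integer matrix with determinant ±1) such that, writing [d̄₁,...,d̄_k] = [d₁,...,d_k]·U, each d̄ᵢ has the form d̄ᵢ = Σ_{j=1}^{tᵢ} λᵢⱼ bⱼ with λᵢⱼ ∈ ℤ and λ_{i,tᵢ} ≠ 0, where the indices satisfy t₁ < t₂ < ... < t_k. -/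
open scoped BigOperators RealInnerProductSpace

/-!
Write `dᵢ = ∑ⱼ Cᵢⱼ bⱼ` with `Cᵢ ∈ ℤⁿ`; the `Cᵢ` are ℤ-independent because the `dᵢ` are
ℝ-independent, so they form a basis of the submodule `N ⊆ ℤⁿ` they span. Over a principal ideal
domain every submodule of `Rⁿ` has a basis in row echelon form: the last coordinate maps `N` onto
an ideal `(g)`; if `g ≠ 0`, a vector of `N` with last coordinate `g` together with an echelon basis
of `N ∩ {xₙ = 0}` (by induction on the number of coordinates allowed to be nonzero) is one. Two
bases of `N` are related by a matrix with unit determinant, and this matrix is `U`.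
-/

open Submodule

structure IsRowEchelon {R : Type*} [Zero R] {k n : ℕ} (e : Fin k → Fin n → R) (t : Fin k → Fin n) :
    Prop where
  strictMono : StrictMono t
  pivot_ne_zero : ∀ i, e i (t i) ≠ 0
  eq_zero_of_lt : ∀ i j, t i < j → e i j = 0

namespace IsRowEchelon

variable {R : Type*} {k n : ℕ} {e : Fin k → Fin n → R} {t : Fin k → Fin n}

theorem linearIndependent [CommRing R] [IsDomain R] (he : IsRowEchelon e t) :
    LinearIndependent R e := by
  classical
  rw [Fintype.linearIndependent_iff]
  intro a ha
  by_contra! hne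
  obtain ⟨i, hai, hmax⟩ := (Finset.univ.filter fun l => a l ≠ 0).exists_max_image id
    (by simpa [Finset.filter_nonempty_iff] using hne)
  simp only [Finset.mem_filter, Finset.mem_univ, true_and, id] at hai hmax
  have hterm : ∀ l, l ≠ i → a l * e l (t i) = 0 := by
    intro l hl
    rcases lt_or_gt_of_ne hl with hlt | hgt
    · rw [he.eq_zero_of_lt l (t i) (he.strictMono hlt), mul_zero]
    · rw [not_imp_comm.mp (hmax l) hgt.not_ge, zero_mul]
  have hpiv : a i * e i (t i) = 0 := by
    simpa [Finset.sum_apply, Finset.sum_eq_single i fun l _ hl => hterm l hl] using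
      congrFun ha (t i)
  exact mul_ne_zero hai (he.pivot_ne_zero i) hpiv

theorem snoc [Zero R] (he : IsRowEchelon e t) {w : Fin n → R} {p : Fin n} (hlt : ∀ i, t i < p)
    (hwp : w p ≠ 0) (hw : ∀ j, p < j → w j = 0) :
    IsRowEchelon (Fin.snoc e w) (Fin.snoc t p : Fin (k + 1) → Fin n) where
  strictMono i j hij := by
    induction j using Fin.lastCases with
    | last =>
      induction i using Fin.lastCases with
      | last => exact absurd hij (lt_irrefl _)
      | cast i => simpa using hlt i
    | cast j =>
      induction i using Fin.lastCases with
      | last => exact absurd hij (Fin.castSucc_lt_last j).not_gt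
      | cast i => simpa using he.strictMono (Fin.castSucc_lt_castSucc_iff.mp hij)
  pivot_ne_zero i := by
    refine Fin.lastCases ?_ (fun i => ?_) i <;> simp [hwp, he.pivot_ne_zero]
  eq_zero_of_lt i := by
    refine Fin.lastCases ?_ (fun i => ?_) i
    · simpa using hw
    · simpa using he.eq_zero_of_lt i

end IsRowEchelon

theorem Submodule.span_singleton_sup_inf_ker_eq {R M : Type*} [CommRing R] [AddCommGroup M]
    [Module R M] {N : Submodule R M} {f : M →ₗ[R] R} {w : M} (hw : w ∈ N)
    (hfw : N.map f = R ∙ f w) : R ∙ w ⊔ N ⊓ LinearMap.ker f = N := by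
  refine le_antisymm (sup_le ((span_singleton_le_iff_mem w N).mpr hw) inf_le_left) fun x hx => ?_
  obtain ⟨c, hc⟩ : ∃ c : R, c • f w = f x := mem_span_singleton.mp (hfw ▸ mem_map_of_mem hx)
  rw [← sub_add_cancel x (c • w)]
  refine add_mem (mem_sup_right ⟨sub_mem hx (smul_mem _ c hw), ?_⟩)
    (mem_sup_left (smul_mem _ c (mem_span_singleton_self w)))
  change f (x - c • w) = 0
  rw [map_sub, map_smul, hc, sub_self]

section

variable {R : Type*} [CommRing R] [IsPrincipalIdealRing R] {n : ℕ}

theorem exists_isRowEchelon_span_eq_of_forall_le_eq_zero (p : ℕ) (hp : p ≤ n)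
    (N : Submodule R (Fin n → R)) (hN : ∀ x ∈ N, ∀ j : Fin n, p ≤ (j : ℕ) → x j = 0) :
    ∃ (k : ℕ) (e : Fin k → Fin n → R) (t : Fin k → Fin n),
      IsRowEchelon e t ∧ (∀ i, (t i : ℕ) < p) ∧ span R (Set.range e) = N := by
  induction p generalizing N with
  | zero =>
    refine ⟨0, Fin.elim0, Fin.elim0, ⟨fun i => i.elim0, fun i => i.elim0, fun i => i.elim0⟩,
      fun i => i.elim0, ?_⟩
    rw [Set.range_eq_empty, span_empty, eq_comm, eq_bot_iff]
    exact fun x hx => (mem_bot R).mpr (funext fun j => hN x hx j j.val.zero_le)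
  | succ p ih =>
    let q : Fin n := ⟨p, hp⟩
    let f : (Fin n → R) →ₗ[R] R := LinearMap.proj q
    obtain ⟨k, e, t, he, ht, hspan⟩ := ih (Nat.le_of_succ_le hp) (N ⊓ LinearMap.ker f)
      fun x hx j hj => by
        rcases hj.eq_or_lt with hjq | hjq
        · obtain rfl : j = q := Fin.ext hjq.symm
          exact hx.2
        · exact hN x hx.1 j hjq
    by_cases hNf : N ≤ LinearMap.ker f
    · exact ⟨k, e, t, he, fun i => (ht i).trans p.lt_succ_self, hspan.trans (inf_eq_left.mpr hNf)⟩
    set g := IsPrincipal.generator (N.map f)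
    obtain ⟨w, hwN, hwg⟩ : ∃ w ∈ N, f w = g :=
      (mem_map (f := f)).mp (IsPrincipal.generator_mem (N.map f))
    have hg : g ≠ 0 := fun hg0 =>
      hNf (LinearMap.le_ker_iff_map.mpr ((IsPrincipal.eq_bot_iff_generator_eq_zero _).mpr hg0))
    refine ⟨k + 1, Fin.snoc e w, Fin.snoc t q,
      he.snoc ht (hwg ▸ hg : f w ≠ 0) fun j hj => hN w hwN j hj, fun i => ?_, ?_⟩
    · induction i using Fin.lastCases with
      | last => simp [q]
      | cast i => simpa using (ht i).trans p.lt_succ_self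
    rw [Fin.range_snoc, span_insert, hspan]
    exact span_singleton_sup_inf_ker_eq hwN (by rw [hwg, IsPrincipal.span_singleton_generator])

theorem exists_isRowEchelon_span_eq (N : Submodule R (Fin n → R)) :
    ∃ (k : ℕ) (e : Fin k → Fin n → R) (t : Fin k → Fin n),
      IsRowEchelon e t ∧ span R (Set.range e) = N := by
  obtain ⟨k, e, t, he, -, hspan⟩ := exists_isRowEchelon_span_eq_of_forall_le_eq_zero n le_rfl N
    fun _ _ j hj => absurd j.isLt hj.not_gt
  exact ⟨k, e, t, he, hspan⟩

end

theorem LinearIndependent.exists_isUnit_det_sum_smul_eq {R M ι : Type*} [CommRing R]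
    [AddCommGroup M] [Module R M] [Fintype ι] [DecidableEq ι] {v w : ι → M}
    (hv : LinearIndependent R v) (hw : LinearIndependent R w)
    (h : span R (Set.range w) = span R (Set.range v)) :
    ∃ V : Matrix ι ι R, IsUnit V.det ∧ ∀ i, ∑ l, V i l • v l = w i := by
  let bv := Module.Basis.span hv
  let bw := (Module.Basis.span hw).map (LinearEquiv.ofEq _ _ h)
  refine ⟨(bv.toMatrix bw).transpose, ?_, fun i => ?_⟩
  · rw [Matrix.det_transpose]
    have := bv.invertibleToMatrix bw
    exact (bv.toMatrix bw).isUnit_det_of_invertible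
  · simpa [bv, bw, Module.Basis.span_apply] using
      congrArg Subtype.val (bv.sum_toMatrix_smul_self bw i)

theorem exists_unimodular_triangular_transform_general {m n k : ℕ}
    (b : Fin n → EuclideanSpace ℝ (Fin m))
    (d : Fin k → EuclideanSpace ℝ (Fin m))
    (hd : LinearIndependent ℝ d) (hdL : ∀ i, inLattice b (d i)) :
    ∃ (U : Matrix (Fin k) (Fin k) ℤ) (t : Fin k → Fin n) (lam : Fin k → Fin n → ℤ),
      (U.det = 1 ∨ U.det = -1) ∧ StrictMono t ∧
      ∀ i : Fin k,
        (∑ l : Fin k, ((U l i : ℝ) • d l)) = (∑ j : Fin n, ((lam i j : ℝ) • b j)) ∧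
        lam i (t i) ≠ 0 ∧ (∀ j : Fin n, t i < j → lam i j = 0) := by
  choose C hC using hdL
  let φ := Fintype.linearCombination ℤ b
  have hφ : ∀ c, φ c = ∑ j, (c j : ℝ) • b j := fun c => by
    simp [φ, Fintype.linearCombination_apply, Int.cast_smul_eq_zsmul]
  have hφC : φ ∘ C = d := funext fun i => (hφ (C i)).trans (hC i).symm
  have hCli : LinearIndependent ℤ C := .of_comp φ (hφC ▸ hd.restrict_scalars' ℤ)
  obtain ⟨k', e, t, he, hspan⟩ := exists_isRowEchelon_span_eq (span ℤ (Set.range C))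
  obtain rfl : k' = k := by
    have := finrank_span_eq_card he.linearIndependent
    rw [hspan, finrank_span_eq_card hCli] at this
    simpa using this.symm
  obtain ⟨V, hV, hVe⟩ := hCli.exists_isUnit_det_sum_smul_eq he.linearIndependent hspan
  refine ⟨V.transpose, t, e, Int.isUnit_iff.mp (V.det_transpose ▸ hV), he.strictMono,
    fun i => ⟨?_, he.pivot_ne_zero i, he.eq_zero_of_lt i⟩⟩
  calc ∑ l, (V.transpose l i : ℝ) • d l = φ (∑ l, V i l • C l) := by
        simp only [map_sum, map_zsmul, ← hφC, Function.comp_apply, Matrix.transpose_apply,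
          Int.cast_smul_eq_zsmul]
    _ = ∑ j, (e i j : ℝ) • b j := by rw [hVe, hφ]

theorem exists_unimodular_triangular_transform {m n k : ℕ}
    (b : Fin n → EuclideanSpace ℝ (Fin m))
    (hb : LinearIndependent ℝ b)
    (d : Fin k → EuclideanSpace ℝ (Fin m))
    (hd : LinearIndependent ℝ d) (hdL : ∀ i, inLattice b (d i)) :
    ∃ (U : Matrix (Fin k) (Fin k) ℤ) (t : Fin k → Fin n) (lam : Fin k → Fin n → ℤ),
      (U.det = 1 ∨ U.det = -1) ∧ StrictMono t ∧
      ∀ i : Fin k,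
        (∑ l : Fin k, ((U l i : ℝ) • d l)) = (∑ j : Fin n, ((lam i j : ℝ) • b j)) ∧
        lam i (t i) ≠ 0 ∧ (∀ j : Fin n, t i < j → lam i j = 0) :=
  exists_unimodular_triangular_transform_general b d hd hdL
end

section
/- Let b₁,...,bₙ ∈ ℝ^m be an LLL-reduced basis with Gram–Schmidt vectors b₁*,...,bₙ*. Then for all 1 ≤ i ≤ j ≤ n, ‖bᵢ*‖² ≤ 2^{j−i}·‖bⱼ*‖². -/
open scoped BigOperators RealInnerProductSpace

/-!
The Lovász condition for consecutive Gram–Schmidt vectors, together with size reduction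
`μ² ≤ 1/4` and Pythagoras, gives `(3/4)‖b*ᵢ‖² ≤ ‖b*ᵢ₊₁‖² + (1/4)‖b*ᵢ‖²`, i.e.
`‖b*ᵢ‖² ≤ 2‖b*ᵢ₊₁‖²`; chaining these steps from `i` to `j` gives the factor `2^{j-i}`.
-/

theorem norm_sq_le_two_mul_of_lovasz {E : Type*} [NormedAddCommGroup E] [InnerProductSpace ℝ E]
    {x y : E} {μ : ℝ} (horth : ⟪x, y⟫ = 0) (hμ : |μ| ≤ 1 / 2)
    (hlovasz : (3 / 4 : ℝ) * ‖y‖ ^ 2 ≤ ‖x + μ • y‖ ^ 2) :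
    ‖y‖ ^ 2 ≤ 2 * ‖x‖ ^ 2 := by
  have hpyth : ‖x + μ • y‖ ^ 2 = ‖x‖ ^ 2 + μ ^ 2 * ‖y‖ ^ 2 := by
    rw [norm_add_sq_real, real_inner_smul_right, horth, norm_smul, mul_pow, Real.norm_eq_abs,
      sq_abs]
    ring
  have hμsq : μ ^ 2 ≤ 1 / 4 := by
    rw [← sq_abs]
    nlinarith [abs_nonneg μ]
  nlinarith [sq_nonneg ‖y‖]

theorem le_pow_mul_of_le_mul_succ {n : ℕ} {c : ℝ} (hc : 0 ≤ c) (f : Fin n → ℝ)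
    (hstep : ∀ i j : Fin n, (i : ℕ) + 1 = j → f i ≤ c * f j) (i j : Fin n) (hij : i ≤ j) :
    f i ≤ c ^ ((j : ℕ) - i) * f j := by
  suffices h : ∀ (k : ℕ) (i : Fin n) (hk : (i : ℕ) + k < n), f i ≤ c ^ k * f ⟨i + k, hk⟩ by
    convert h (j - i) i (by omega)
    exact (Nat.add_sub_cancel' hij).symm
  intro k
  induction k with
  | zero => simp
  | succ k ih =>
    intro i hk
    calc f i ≤ c * f ⟨i + 1, by omega⟩ := hstep _ _ rfl
      _ ≤ c * (c ^ k * f ⟨i + 1 + k, by omega⟩) := by gcongr; exact ih ⟨i + 1, by omega⟩ _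
      _ = c ^ (k + 1) * f ⟨i + (k + 1), hk⟩ := by simp only [add_assoc, add_comm 1 k]; ring

theorem LLLReduced.gso_norm_sq_le_two_mul_succ {m n : ℕ} {b : Fin n → EuclideanSpace ℝ (Fin m)}
    (hred : LLLReduced b) (i j : Fin n) (hij : (i : ℕ) + 1 = j) :
    ‖gso b i‖ ^ 2 ≤ 2 * ‖gso b j‖ ^ 2 := by
  have hlt : i < j := Fin.lt_def.mpr (by omega)
  exact norm_sq_le_two_mul_of_lovasz (InnerProductSpace.gramSchmidt_orthogonal ℝ b hlt.ne')
    (hred.1 i j hlt) (hred.2 i j hij)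

theorem gso_norm_sq_le_two_pow_general {m n : ℕ}
    (b : Fin n → EuclideanSpace ℝ (Fin m))
    (hred : LLLReduced b)
    (i j : Fin n) (hij : i ≤ j) :
    ‖gso b i‖ ^ 2 ≤ 2 ^ ((j : ℕ) - (i : ℕ)) * ‖gso b j‖ ^ 2 :=
  le_pow_mul_of_le_mul_succ zero_le_two (fun k => ‖gso b k‖ ^ 2)
    hred.gso_norm_sq_le_two_mul_succ i j hij

theorem gso_norm_sq_le_two_pow {m n : ℕ}
    (b : Fin n → EuclideanSpace ℝ (Fin m))
    (hb : LinearIndependent ℝ b) (hred : LLLReduced b)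
    (i j : Fin n) (hij : i ≤ j) :
    ‖gso b i‖ ^ 2 ≤ 2 ^ ((j : ℕ) - (i : ℕ)) * ‖gso b j‖ ^ 2 :=
  gso_norm_sq_le_two_pow_general b hred i j hij
end

section
/- Let b₁,...,bₙ ∈ ℝ^m be an LLL-reduced basis, and let 1 ≤ k ≤ n. Then ‖b₁‖·‖b₂‖⋯‖b_k‖ ≤ 2^{k(n−1)/4} · det L(b₁,...,b_k). -/
open scoped BigOperators RealInnerProductSpace

/-!
Gram–Schmidt is a unitriangular change of basis, so the Gram determinant of `b₁, …, b_k` is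
`∏ ‖bᵢ*‖²` and `‖bᵢ‖² = ‖bᵢ*‖² + ∑_{j<i} μᵢⱼ² ‖bⱼ*‖²`. The exchange condition together with
`|μᵢⱼ| ≤ 1/2` gives `‖bᵢ*‖² ≤ 2 ‖bᵢ₊₁*‖²`, hence `‖bᵢ‖² ≤ 2^{i-1} ‖bᵢ*‖²`, and multiplying yields
`∏ ‖bᵢ‖ ≤ 2^{k(k-1)/4} det L(b₁, …, b_k)`. Gram–Schmidt only looks to the left, so the prefix
`b₁, …, b_k` of an LLL-reduced basis is LLL-reduced, and `k - 1 ≤ n - 1`.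
-/

section Orthogonal

variable {E ι : Type*} [NormedAddCommGroup E] [InnerProductSpace ℝ E] {w : ι → E}

theorem inner_sum_smul_sum_smul_of_pairwise_orthogonal (hw : Pairwise fun i j => ⟪w i, w j⟫ = 0)
    (a c : ι → ℝ) (s : Finset ι) :
    ⟪∑ j ∈ s, a j • w j, ∑ j ∈ s, c j • w j⟫ = ∑ j ∈ s, a j * c j * ‖w j‖ ^ 2 := by
  classical
  simp only [sum_inner, inner_sum, real_inner_smul_left, real_inner_smul_right]
  refine Finset.sum_congr rfl fun j hj => ?_
  rw [Finset.sum_eq_single_of_mem j hj fun l _ hlj => by rw [hw hlj, mul_zero, mul_zero],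
    real_inner_self_eq_norm_sq]
  ring

theorem gram_eq_mul_diagonal_mul_transpose [Fintype ι] [DecidableEq ι]
    (hw : Pairwise fun i j => ⟪w i, w j⟫ = 0) (A : Matrix ι ι ℝ) :
    Matrix.gram ℝ (fun i => ∑ j, A i j • w j) =
      A * Matrix.diagonal (fun j => ‖w j‖ ^ 2) * A.transpose := by
  ext i l
  rw [Matrix.gram_apply, inner_sum_smul_sum_smul_of_pairwise_orthogonal hw, Matrix.mul_apply]
  simp only [Matrix.mul_diagonal, Matrix.transpose_apply]
  exact Finset.sum_congr rfl fun j _ => by ring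

end Orthogonal

theorem gso_pairwise_orthogonal {m n : ℕ} (b : Fin n → EuclideanSpace ℝ (Fin m)) :
    Pairwise fun i j => ⟪gso b i, gso b j⟫ = 0 :=
  fun _ _ => InnerProductSpace.gramSchmidt_orthogonal ℝ b

theorem gso_add_sum_mu_smul_gso {m n : ℕ} (b : Fin n → EuclideanSpace ℝ (Fin m)) (i : Fin n) :
    gso b i + ∑ j ∈ Finset.Iio i, mu b i j • gso b j = b i := by
  rw [InnerProductSpace.gramSchmidt_def'' ℝ b i]
  simp [mu, gso, real_inner_comm]

theorem gso_castLE {m n k : ℕ} (hkn : k ≤ n) (b : Fin n → EuclideanSpace ℝ (Fin m)) (i : Fin k) :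
    gso (fun j => b (Fin.castLE hkn j)) i = gso b (Fin.castLE hkn i) := by
  induction i using WellFoundedLT.induction with
  | _ i ih =>
    rw [gso, InnerProductSpace.gramSchmidt_def, gso, InnerProductSpace.gramSchmidt_def,
      Fin.sum_Iio_castLE]
    congr 1
    refine Finset.sum_congr rfl fun j hj => ?_
    simp only [gso] at ih
    rw [ih j (Finset.mem_Iio.1 hj)]

theorem mu_castLE {m n k : ℕ} (hkn : k ≤ n) (b : Fin n → EuclideanSpace ℝ (Fin m)) (i j : Fin k) :
    mu (fun l => b (Fin.castLE hkn l)) i j = mu b (Fin.castLE hkn i) (Fin.castLE hkn j) := by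
  simp only [mu, gso_castLE]

noncomputable def muMatrix {m n : ℕ} (b : Fin n → EuclideanSpace ℝ (Fin m)) :
    Matrix (Fin n) (Fin n) ℝ :=
  Matrix.of fun i j => if j < i then mu b i j else if i = j then 1 else 0

theorem sum_muMatrix_smul_gso {m n : ℕ} (b : Fin n → EuclideanSpace ℝ (Fin m)) (i : Fin n) :
    ∑ j, muMatrix b i j • gso b j = b i := by
  rw [← gso_add_sum_mu_smul_gso b i]
  simp [muMatrix, ite_smul, Finset.sum_ite, Finset.filter_gt_eq_Iio, add_comm]

theorem det_muMatrix {m n : ℕ} (b : Fin n → EuclideanSpace ℝ (Fin m)) :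
    (muMatrix b).det = 1 := by
  rw [Matrix.det_of_isLowerTriangular _ fun i j hij => ?_]
  · simp [muMatrix]
  · rw [OrderDual.toDual_lt_toDual] at hij
    simp [muMatrix, hij.not_gt, hij.ne]

theorem gram_eq_muMatrix_mul_diagonal_mul_transpose {m n : ℕ}
    (b : Fin n → EuclideanSpace ℝ (Fin m)) :
    Matrix.gram ℝ b =
      muMatrix b * Matrix.diagonal (fun j => ‖gso b j‖ ^ 2) * (muMatrix b).transpose := by
  conv_lhs => rw [← funext (sum_muMatrix_smul_gso b)]
  exact gram_eq_mul_diagonal_mul_transpose (gso_pairwise_orthogonal b) _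

theorem latticeDet_eq_prod_norm_gso {m n : ℕ} (b : Fin n → EuclideanSpace ℝ (Fin m)) :
    latticeDet b = ∏ i, ‖gso b i‖ := by
  rw [latticeDet, ← Matrix.gram, gram_eq_muMatrix_mul_diagonal_mul_transpose, Matrix.det_mul,
    Matrix.det_mul, Matrix.det_transpose, det_muMatrix, Matrix.det_diagonal, one_mul, mul_one,
    Finset.prod_pow, Real.sqrt_sq (Finset.prod_nonneg fun i _ => norm_nonneg _)]

theorem norm_sq_eq_norm_gso_sq_add_sum {m n : ℕ} (b : Fin n → EuclideanSpace ℝ (Fin m))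
    (i : Fin n) :
    ‖b i‖ ^ 2 = ‖gso b i‖ ^ 2 + ∑ j ∈ Finset.Iio i, mu b i j ^ 2 * ‖gso b j‖ ^ 2 := by
  have h := congrFun (congrFun (gram_eq_muMatrix_mul_diagonal_mul_transpose b) i) i
  rw [Matrix.gram_apply, real_inner_self_eq_norm_sq, Matrix.mul_apply] at h
  simpa [muMatrix, Matrix.mul_diagonal, Finset.sum_ite, Finset.filter_gt_eq_Iio, add_comm, sq,
    mul_comm, mul_left_comm, mul_assoc] using h

theorem sum_Iio_two_pow_sub {n : ℕ} (i : Fin n) :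
    ∑ j ∈ Finset.Iio i, (2 : ℝ) ^ ((i : ℕ) - j) = 2 ^ ((i : ℕ) + 1) - 2 := by
  have h := Finset.sum_map (Finset.Iio i) Fin.valEmbedding fun t => (2 : ℝ) ^ ((i : ℕ) - t)
  rw [Fin.map_valEmbedding_Iio, Nat.Iio_eq_range, Fin.valEmbedding_apply] at h
  have hreflect : ∀ t ∈ Finset.range i, (2 : ℝ) ^ ((i : ℕ) - ((i - 1) - t)) = 2 * 2 ^ t := by
    intro t ht
    rw [← pow_succ', show (i : ℕ) - ((i - 1) - t) = t + 1 by have := Finset.mem_range.1 ht; omega]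
  rw [← h, ← Finset.sum_range_reflect, Finset.sum_congr rfl hreflect, ← Finset.mul_sum,
    geom_sum_eq (by norm_num)]
  ring

theorem sum_fin_val_cast (n : ℕ) : ∑ i : Fin n, (i : ℝ) = n * (n - 1) / 2 := by
  rw [Fin.sum_univ_eq_sum_range (fun i => (i : ℝ))]
  induction n with
  | zero => simp
  | succ n ih =>
    rw [Finset.sum_range_succ, ih]
    push_cast
    ring

namespace LLLReduced

variable {m n : ℕ} {b : Fin n → EuclideanSpace ℝ (Fin m)}

theorem castLE (hred : LLLReduced b) {k : ℕ} (hkn : k ≤ n) :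
    LLLReduced fun i : Fin k => b (Fin.castLE hkn i) := by
  refine ⟨fun i j hij => ?_, fun i j hij => ?_⟩
  · rw [mu_castLE]
    exact hred.1 _ _ (Fin.castLE_lt_castLE_iff hkn |>.2 hij)
  · rw [mu_castLE, gso_castLE, gso_castLE]
    exact hred.2 _ _ hij

theorem mu_sq_le (hred : LLLReduced b) {i j : Fin n} (hij : i < j) : mu b j i ^ 2 ≤ 1 / 4 := by
  have h := abs_le.1 (hred.1 i j hij)
  nlinarith

theorem norm_gso_sq_le_two_mul (hred : LLLReduced b) {i j : Fin n} (hij : (i : ℕ) + 1 = j) :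
    ‖gso b i‖ ^ 2 ≤ 2 * ‖gso b j‖ ^ 2 := by
  have hlt : i < j := Fin.lt_def.2 (by omega)
  have hexch := hred.2 i j hij
  have horth : ⟪gso b j, mu b j i • gso b i⟫ = 0 := by
    rw [real_inner_smul_right, gso_pairwise_orthogonal b hlt.ne', mul_zero]
  rw [sq, sq (‖gso b j + _‖), norm_add_sq_eq_norm_sq_add_norm_sq_real horth, norm_smul,
    Real.norm_eq_abs] at hexch
  nlinarith [hred.mu_sq_le hlt, sq_abs (mu b j i)]

theorem norm_gso_sq_le_two_pow_mul (hred : LLLReduced b) {i j : Fin n} (hij : i ≤ j) :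
    ‖gso b i‖ ^ 2 ≤ 2 ^ ((j : ℕ) - i) * ‖gso b j‖ ^ 2 := by
  obtain ⟨d, hd⟩ := Nat.exists_eq_add_of_le (Fin.le_def.1 hij)
  induction d generalizing j with
  | zero => simp [Fin.ext (hd.trans (add_zero _))]
  | succ d ih =>
    have hprev := ih (j := ⟨i + d, by omega⟩) (Fin.le_def.2 (by simp)) rfl
    have hstep := hred.norm_gso_sq_le_two_mul (i := ⟨i + d, by omega⟩) (j := j)
      (by simp only; omega)
    rw [hd, Nat.add_sub_cancel_left, pow_succ (2 : ℝ) d]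
    simp only [Nat.add_sub_cancel_left] at hprev
    nlinarith [pow_pos (two_pos (α := ℝ)) d]

theorem norm_sq_le (hred : LLLReduced b) (i : Fin n) :
    ‖b i‖ ^ 2 ≤ 2 ^ (i : ℕ) * ‖gso b i‖ ^ 2 := by
  have hterm : ∀ j ∈ Finset.Iio i,
      mu b i j ^ 2 * ‖gso b j‖ ^ 2 ≤ 1 / 4 * (2 ^ ((i : ℕ) - j) * ‖gso b i‖ ^ 2) := fun j hj =>
    mul_le_mul (hred.mu_sq_le (Finset.mem_Iio.1 hj))
      (hred.norm_gso_sq_le_two_pow_mul (Finset.mem_Iio.1 hj).le) (sq_nonneg _) (by norm_num)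
  calc ‖b i‖ ^ 2
      ≤ ‖gso b i‖ ^ 2 + ∑ j ∈ Finset.Iio i, 1 / 4 * (2 ^ ((i : ℕ) - j) * ‖gso b i‖ ^ 2) := by
        rw [norm_sq_eq_norm_gso_sq_add_sum]
        exact add_le_add_right (Finset.sum_le_sum hterm) _
    _ = (1 + (2 ^ ((i : ℕ) + 1) - 2) / 4) * ‖gso b i‖ ^ 2 := by
        rw [← Finset.mul_sum, ← Finset.sum_mul, sum_Iio_two_pow_sub]
        ring
    _ ≤ 2 ^ (i : ℕ) * ‖gso b i‖ ^ 2 := by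
        gcongr
        nlinarith [one_le_pow₀ (M₀ := ℝ) (n := i) one_le_two, pow_succ (2 : ℝ) i]

theorem norm_le (hred : LLLReduced b) (i : Fin n) :
    ‖b i‖ ≤ 2 ^ ((i : ℝ) / 2) * ‖gso b i‖ := by
  have hsqrt : (2 : ℝ) ^ ((i : ℝ) / 2) = √(2 ^ (i : ℕ)) := by
    rw [Real.sqrt_eq_rpow, ← Real.rpow_natCast, ← Real.rpow_mul zero_le_two]
    ring_nf
  rw [hsqrt, ← Real.sqrt_sq (norm_nonneg (gso b i)), ← Real.sqrt_mul (by positivity)]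
  exact (Real.le_sqrt (norm_nonneg _) (by positivity)).2 (hred.norm_sq_le i)

theorem prod_norm_le (hred : LLLReduced b) :
    ∏ i, ‖b i‖ ≤ 2 ^ ((n : ℝ) * ((n : ℝ) - 1) / 4) * latticeDet b :=
  calc ∏ i, ‖b i‖ ≤ ∏ i : Fin n, 2 ^ ((i : ℝ) / 2) * ‖gso b i‖ :=
        Finset.prod_le_prod (fun _ _ => norm_nonneg _) fun i _ => hred.norm_le i
    _ = 2 ^ (∑ i : Fin n, (i : ℝ) / 2) * latticeDet b := by
        rw [Finset.prod_mul_distrib, Real.rpow_sum_of_pos two_pos, latticeDet_eq_prod_norm_gso]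
    _ = 2 ^ ((n : ℝ) * ((n : ℝ) - 1) / 4) * latticeDet b := by
        rw [← Finset.sum_div, sum_fin_val_cast]
        ring_nf

end LLLReduced

theorem prod_norm_le_det_prefix_general {m n k : ℕ} (hkn : k ≤ n)
    (b : Fin n → EuclideanSpace ℝ (Fin m))
    (hred : LLLReduced b) :
    ∏ i : Fin k, ‖b (Fin.castLE hkn i)‖ ≤
      2 ^ ((k : ℝ) * ((n : ℝ) - 1) / 4) *
        latticeDet (fun i : Fin k => b (Fin.castLE hkn i)) := by
  have hkn' : (k : ℝ) ≤ n := Nat.cast_le.2 hkn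
  calc ∏ i : Fin k, ‖b (Fin.castLE hkn i)‖
      ≤ 2 ^ ((k : ℝ) * ((k : ℝ) - 1) / 4) * latticeDet (fun i : Fin k => b (Fin.castLE hkn i)) :=
        (hred.castLE hkn).prod_norm_le
    _ ≤ _ := by
        gcongr
        · exact Real.sqrt_nonneg _
        · norm_num

theorem prod_norm_le_det_prefix {m n k : ℕ} (hk1 : 1 ≤ k) (hkn : k ≤ n)
    (b : Fin n → EuclideanSpace ℝ (Fin m))
    (hb : LinearIndependent ℝ b) (hred : LLLReduced b) :
    ∏ i : Fin k, ‖b (Fin.castLE hkn i)‖ ≤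
      2 ^ ((k : ℝ) * ((n : ℝ) - 1) / 4) *
        latticeDet (fun i : Fin k => b (Fin.castLE hkn i)) :=
  prod_norm_le_det_prefix_general hkn b hred
end
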